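/- Every completely regular Hausdorff k-space X is weakly Grothendieck; that is, Cp(X) is a g-space: every subset A of Cp(X) that is countably compact in Cp(X) has compact closure in Cp(X). -/

import Mathlib

/-!
A countably compact `A ⊆ Cp(X)` is pointwise bounded, so its closure in `ℝ^X` is compact, and it
remains to show that this closure consists of continuous functions; in a k-space it suffices to
check continuity on each compact `K`. If `g` in the closure jumped by `ε` at `x ∈ K`, choose
alternately `fₙ ∈ A` close to `g` at `x, x₀, …, xₙ₋₁` and `xₙ ∈ K` with `|g xₙ - g x| ≥ ε` at which
`f₀, …, fₙ₋₁` are close to their values at `x`. A cluster point `h ∈ Cp(X)` of `(fₙ)` agrees with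
`g` at `x` and at every `xⱼ`, while every `fⱼ`, hence `h`, takes the same value at `x` and at a
cluster point `y ∈ K` of `(xₙ)`. Continuity of `h` at `y` then contradicts the jump.
-/

open Set Filter Topology

def IsLimitPointOf {Z : Type*} [TopologicalSpace Z] (x : Z) (S : Set Z) : Prop :=
  ∀ U : Set Z, IsOpen U → x ∈ U → (S ∩ U).Infinite

def CountablyCompactIn {Z : Type*} [TopologicalSpace Z] (A B : Set Z) : Prop :=
  ∀ S ⊆ A, S.Infinite → ∃ x ∈ B, IsLimitPointOf x S

def IsGSpace (Y : Type*) [TopologicalSpace Y] : Prop :=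
  ∀ A : Set Y, CountablyCompactIn A Set.univ → IsCompact (closure A)

def IsHereditaryGSpace (Y : Type*) [TopologicalSpace Y] : Prop :=
  ∀ B : Set Y, IsGSpace B

def Cp (X : Type*) [TopologicalSpace X] : Type _ := {f : X → ℝ // Continuous f}

instance (X : Type*) [TopologicalSpace X] : TopologicalSpace (Cp X) :=
  inferInstanceAs (TopologicalSpace {f : X → ℝ // Continuous f})

def CpI (X : Type*) [TopologicalSpace X] : Type _ := {f : X → unitInterval // Continuous f}

instance (X : Type*) [TopologicalSpace X] : TopologicalSpace (CpI X) :=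
  inferInstanceAs (TopologicalSpace {f : X → unitInterval // Continuous f})

def CountablyTight (X : Type*) [TopologicalSpace X] : Prop :=
  ∀ (A : Set X) (x : X), x ∈ closure A → ∃ B ⊆ A, B.Countable ∧ x ∈ closure B

def CountablyCompactSpace' (Y : Type*) [TopologicalSpace Y] : Prop :=
  ∀ S : Set Y, S.Infinite → ∃ x : Y, IsLimitPointOf x S

def DULC {X : Type*} [TopologicalSpace X] (A : Set (CpI X)) : Prop :=
  ∀ (f : ℕ → CpI X), (∀ n, f n ∈ A) → ∀ (x : ℕ → X) (𝒰 𝒱 : Ultrafilter ℕ),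
    (∃ y : X, Filter.Tendsto x (𝒱 : Filter ℕ) (nhds y)) →
    ∀ (g h : ℕ → unitInterval) (u v : unitInterval),
      (∀ n, Filter.Tendsto (fun m => (f n).1 (x m)) (𝒱 : Filter ℕ) (nhds (g n))) →
      Filter.Tendsto g (𝒰 : Filter ℕ) (nhds u) →
      (∀ m, Filter.Tendsto (fun n => (f n).1 (x m)) (𝒰 : Filter ℕ) (nhds (h m))) →
      Filter.Tendsto h (𝒱 : Filter ℕ) (nhds v) →
      u = v

def DLC {X : Type*} [TopologicalSpace X] (A : Set (CpI X)) : Prop :=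
  ∀ (f : ℕ → CpI X), (∀ n, f n ∈ A) → ∀ (x : ℕ → X),
    ∀ (g h : ℕ → unitInterval) (u v : unitInterval),
      (∀ n, Filter.Tendsto (fun m => (f n).1 (x m)) Filter.atTop (nhds (g n))) →
      Filter.Tendsto g Filter.atTop (nhds u) →
      (∀ m, Filter.Tendsto (fun n => (f n).1 (x m)) Filter.atTop (nhds (h m))) →
      Filter.Tendsto h Filter.atTop (nhds v) →
      u = v

def IsKSpace (X : Type*) [TopologicalSpace X] : Prop :=
  ∀ Y : Set X, IsClosed Y ↔
    ∀ K : Set X, IsCompact K → IsClosed ((↑·) ⁻¹' Y : Set K)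

theorem exists_seq_forall_of_forall_fin_exists {α : Type*}
    (P : (n : ℕ) → (Fin n → α) → α → Prop) (h : ∀ n s, ∃ a, P n s a) :
    ∃ u : ℕ → α, ∀ n, P n (fun j => u j) (u n) := by
  choose next hnext using h
  let pre : (n : ℕ) → Fin n → α :=
    fun n => Nat.rec (motive := fun n => Fin n → α) Fin.elim0
      (fun n s => Fin.snoc s (next n s)) n
  have hpre : ∀ n, pre n = fun j : Fin n => next j (pre j) := by
    intro n
    induction n with
    | zero => funext j; exact j.elim0
    | succ n ih =>
      funext j
      refine Fin.lastCases ?_ (fun i => ?_) j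
      · show Fin.snoc (α := fun _ => α) (pre n) (next n (pre n)) (Fin.last n) = _
        rw [Fin.snoc_last]
        rfl
      · show Fin.snoc (α := fun _ => α) (pre n) (next n (pre n)) i.castSucc = _
        rw [Fin.snoc_castSucc, ih]
        rfl
  exact ⟨fun n => next n (pre n), fun n => hpre n ▸ hnext n (pre n)⟩

theorem MapClusterPt.eq_of_tendsto {X α : Type*} [TopologicalSpace X] [T2Space X] {l : Filter α}
    {u : α → X} {a b : X} (ha : MapClusterPt a l u) (hb : Tendsto u l (𝓝 b)) : a = b :=
  eq_of_nhds_neBot (ha.neBot.mono (inf_le_inf_left _ hb))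

theorem tendsto_of_eventually_dist_lt_one_div_succ {α : Type*} [PseudoMetricSpace α]
    {u : ℕ → α} {a : α} (h : ∀ᶠ n in atTop, dist (u n) a < 1 / ((n : ℝ) + 1)) :
    Tendsto u atTop (𝓝 a) :=
  tendsto_iff_dist_tendsto_zero.2 <| squeeze_zero' (Eventually.of_forall fun _ => dist_nonneg)
    (h.mono fun _ => le_of_lt) tendsto_one_div_add_atTop_nhds_zero_nat

theorem isCompact_closure_of_forall_isBounded_eval {ι : Type*} {S : Set (ι → ℝ)}
    (hS : ∀ i, Bornology.IsBounded ((fun f => f i) '' S)) : IsCompact (closure S) := by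
  have hbox : IsCompact (univ.pi fun i => closure ((fun f => f i) '' S)) :=
    isCompact_univ_pi fun i => (hS i).isCompact_closure
  refine hbox.of_isClosed_subset isClosed_closure (closure_minimal ?_ hbox.isClosed)
  exact fun f hf i _ => subset_closure (mem_image_of_mem _ hf)

section CountablyCompactIn

variable {Z : Type*} [TopologicalSpace Z] {A : Set Z}

theorem CountablyCompactIn.exists_mapClusterPt (hA : CountablyCompactIn A univ) {u : ℕ → Z}
    (hu : ∀ n, u n ∈ A) :
    ∃ z, MapClusterPt z atTop u := by
  by_cases hfin : (range u).Finite
  · have := hfin.to_subtype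
    obtain ⟨⟨z, _⟩, hz⟩ := _root_.Finite.exists_infinite_fiber (rangeFactorization u)
    have hfreq : ∃ᶠ n in atTop, u n = z := by
      refine Nat.frequently_atTop_iff_infinite.2 ((infinite_coe_iff.1 hz).mono fun n hn => ?_)
      exact congrArg Subtype.val hn
    exact ⟨z, mapClusterPt_iff_frequently.2 fun s hs =>
      hfreq.mono fun n hn => hn ▸ mem_of_mem_nhds hs⟩
  · obtain ⟨z, -, hz⟩ := hA (range u) (range_subset_iff.2 hu) hfin
    refine ⟨z, (nhds_basis_opens z).mapClusterPt_iff_frequently.2 fun U ⟨hzU, hU⟩ => ?_⟩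
    refine Nat.frequently_atTop_iff_infinite.2 fun hfin' => hz U hU hzU ?_
    refine (hfin'.image u).subset ?_
    rintro _ ⟨⟨n, rfl⟩, hn⟩
    exact mem_image_of_mem u hn

theorem CountablyCompactIn.isBounded_image (hA : CountablyCompactIn A univ) {φ : Z → ℝ}
    (hφ : Continuous φ) :
    Bornology.IsBounded (φ '' A) := by
  by_contra hunb
  simp only [isBounded_iff_forall_norm_le, not_exists, not_forall, not_le, forall_mem_image,
    exists_prop] at hunb
  choose u hu hlarge using fun n : ℕ => hunb n
  obtain ⟨z, hz⟩ := hA.exists_mapClusterPt hu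
  have hnear : ∃ᶠ n in atTop, ‖φ (u n)‖ < ‖φ z‖ + 1 :=
    (hz.continuousAt_comp hφ.continuousAt).frequently
      ((continuous_norm.tendsto (φ z)).eventually (gt_mem_nhds (lt_add_one _)))
  have hfar : ∀ᶠ n in atTop, ‖φ z‖ + 1 < ‖φ (u n)‖ :=
    (tendsto_natCast_atTop_atTop.eventually_gt_atTop _).mono fun n hn => hn.trans (hlarge n)
  obtain ⟨n, h1, h2⟩ := (hnear.and_eventually hfar).exists
  exact lt_asymm h1 h2

end CountablyCompactIn

namespace Cp

variable {X : Type*} [TopologicalSpace X]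

theorem isEmbedding_val : @IsEmbedding (Cp X) (X → ℝ) _ _ Subtype.val :=
  IsEmbedding.subtypeVal

theorem continuous_eval (z : X) : Continuous fun φ : Cp X => φ.1 z :=
  (continuous_apply z).comp isEmbedding_val.continuous

theorem mapClusterPt_of_interlaced_limits {f : ℕ → Cp X} {xs : ℕ → X} {x y : X} {g : X → ℝ}
    {h : Cp X} (hh : MapClusterPt h atTop f) (hy : MapClusterPt y atTop xs)
    (hfx : Tendsto (fun n => (f n).1 x) atTop (𝓝 (g x)))
    (hfxs : ∀ j, Tendsto (fun n => (f n).1 (xs j)) atTop (𝓝 (g (xs j))))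
    (hxs : ∀ j, Tendsto (fun n => (f j).1 (xs n)) atTop (𝓝 ((f j).1 x))) :
    MapClusterPt (g x) atTop (g ∘ xs) := by
  have hh_eq : ∀ z, Tendsto (fun n => (f n).1 z) atTop (𝓝 (g z)) → h.1 z = g z := fun z hz =>
    (hh.continuousAt_comp (continuous_eval z).continuousAt).eq_of_tendsto hz
  have hfy : ∀ j, (f j).1 y = (f j).1 x := fun j =>
    (hy.continuousAt_comp (f j).2.continuousAt).eq_of_tendsto (hxs j)
  have hhy : h.1 y = h.1 x :=
    (isClosed_eq (continuous_eval y) (continuous_eval x)).mem_of_mapClusterPt hh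
      (Eventually.of_forall hfy)
  have hgxs : g ∘ xs = h.1 ∘ xs := funext fun j => (hh_eq _ (hfxs j)).symm
  rw [hgxs, ← hh_eq x hfx, ← hhy]
  exact hy.continuousAt_comp h.2.continuousAt

theorem exists_interlaced_seq {A : Set (Cp X)} {g : X → ℝ} (hg : g ∈ closure (Subtype.val '' A))
    {S : Set X} {x : X} (hx : x ∈ closure S) :
    ∃ (f : ℕ → Cp X) (xs : ℕ → X), (∀ n, f n ∈ A) ∧ (∀ n, xs n ∈ S) ∧
      Tendsto (fun n => (f n).1 x) atTop (𝓝 (g x)) ∧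
      (∀ j, Tendsto (fun n => (f n).1 (xs j)) atTop (𝓝 (g (xs j)))) ∧
      ∀ j, Tendsto (fun n => (f j).1 (xs n)) atTop (𝓝 ((f j).1 x)) := by
  obtain ⟨u, hu⟩ := exists_seq_forall_of_forall_fin_exists (α := Cp X × X)
    (fun n s a => a.1 ∈ A ∧ a.2 ∈ S ∧ dist (a.1.1 x) (g x) < 1 / ((n : ℝ) + 1) ∧
      (∀ j, dist (a.1.1 (s j).2) (g (s j).2) < 1 / ((n : ℝ) + 1)) ∧
      ∀ j, dist ((s j).1.1 a.2) ((s j).1.1 x) < 1 / ((n : ℝ) + 1)) fun n s => by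
    have hδ : (0 : ℝ) < 1 / ((n : ℝ) + 1) := Nat.one_div_pos_of_nat
    have hg_near : ∀ z, ∀ᶠ ψ in 𝓝 g, dist (ψ z) (g z) < 1 / ((n : ℝ) + 1) := fun z =>
      ((continuous_apply z).tendsto g).eventually (Metric.ball_mem_nhds (g z) hδ)
    obtain ⟨_, ⟨φ, hφA, rfl⟩, hφx, hφs⟩ := ((mem_closure_iff_frequently.1 hg).and_eventually
      ((hg_near x).and (eventually_all.2 fun j => hg_near (s j).2))).exists
    obtain ⟨y, hyS, hy⟩ := ((mem_closure_iff_frequently.1 hx).and_eventually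
      (eventually_all.2 fun j =>
        ((s j).1.2.tendsto x).eventually (Metric.ball_mem_nhds _ hδ))).exists
    exact ⟨(φ, y), hφA, hyS, hφx, hφs, hy⟩
  refine ⟨fun n => (u n).1, fun n => (u n).2, fun n => (hu n).1, fun n => (hu n).2.1,
    tendsto_of_eventually_dist_lt_one_div_succ (Eventually.of_forall fun n => (hu n).2.2.1),
    fun j => ?_, fun j => ?_⟩
  · exact tendsto_of_eventually_dist_lt_one_div_succ
      ((eventually_gt_atTop j).mono fun n hn => (hu n).2.2.2.1 ⟨j, hn⟩)
  · exact tendsto_of_eventually_dist_lt_one_div_succ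
      ((eventually_gt_atTop j).mono fun n hn => (hu n).2.2.2.2 ⟨j, hn⟩)

theorem continuousOn_of_mem_closure {A : Set (Cp X)} (hA : CountablyCompactIn A univ)
    {g : X → ℝ} (hg : g ∈ closure (Subtype.val '' A)) {K : Set X} (hK : IsCompact K) :
    ContinuousOn g K := by
  intro x hxK
  by_contra hdisc
  obtain ⟨ε, hε, hfar⟩ : ∃ ε > 0, ∃ᶠ y in 𝓝[K] x, ¬ dist (g y) (g x) < ε := by
    simpa [ContinuousWithinAt, Metric.tendsto_nhds] using hdisc
  have hx : x ∈ closure (K ∩ {y | ε ≤ dist (g y) (g x)}) := by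
    rw [mem_closure_iff_frequently]
    simpa [frequently_nhdsWithin_iff, and_comm] using hfar
  obtain ⟨f, xs, hfA, hxsS, hfx, hfxs, hxs⟩ := exists_interlaced_seq hg hx
  obtain ⟨y, -, hy⟩ := hK.exists_mapClusterPt (f := atTop)
    (tendsto_principal.2 (.of_forall fun n => (hxsS n).1))
  obtain ⟨h, hh⟩ := hA.exists_mapClusterPt hfA
  obtain ⟨n, hn⟩ := ((mapClusterPt_of_interlaced_limits hh hy hfx hfxs hxs).frequently
    (Metric.ball_mem_nhds (g x) hε)).exists
  exact (hxsS n).2.not_gt hn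

end Cp

theorem IsKSpace.continuous_of_continuousOn {X Y : Type*} [TopologicalSpace X]
    [TopologicalSpace Y] (hX : IsKSpace X) {g : X → Y}
    (hg : ∀ K, IsCompact K → ContinuousOn g K) : Continuous g := by
  refine continuous_iff_isClosed.2 fun C hC => (hX _).2 fun K hK => ?_
  exact hC.preimage (continuousOn_iff_continuous_domRestrict.1 (hg K hK))

theorem kSpace_weaklyGrothendieck_general
    {X : Type*} [TopologicalSpace X]
    (hk : IsKSpace X) : IsGSpace (Cp X) := by
  intro A hA
  have hcompact : IsCompact (closure (Subtype.val '' A)) :=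
    isCompact_closure_of_forall_isBounded_eval fun z => by
      convert hA.isBounded_image (Cp.continuous_eval z) using 1
      exact image_image _ _ _
  have hcont : closure (Subtype.val '' A) ⊆ range (Subtype.val : Cp X → X → ℝ) := fun g hg =>
    ⟨⟨g, hk.continuous_of_continuousOn fun K hK => Cp.continuousOn_of_mem_closure hA hg hK⟩, rfl⟩
  rw [Cp.isEmbedding_val.isCompact_iff, Cp.isEmbedding_val.closure_eq_preimage_closure_image]
  convert hcompact using 1
  exact image_preimage_eq_of_subset hcont

/-- Every completely regular Hausdorff k-space is weakly Grothendieck: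
`Cp(X)` is a g-space. -/
theorem kSpace_weaklyGrothendieck
    {X : Type*} [TopologicalSpace X] [CompletelyRegularSpace X] [T2Space X]
    (hk : IsKSpace X) : IsGSpace (Cp X) :=
  kSpace_weaklyGrothendieck_general hk
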